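/- Let T be an irreducible positive trace-preserving linear map on M_n and V ⊆ ℂⁿ a nonzero subspace. Then for every unit vector φ ∈ ℂⁿ, the hitting probability of V from φ equals 1: Σ_{r≥1} Tr(ℙT(ℚT)^{r−1}ρ_φ) = 1. -/

import Mathlib

open Matrix
open scoped ComplexOrder

noncomputable section

/-- The algebra of `n × n` complex matrices. -/
abbrev Mn (n : ℕ) : Type := Matrix (Fin n) (Fin n) ℂ

/-- The map `X ↦ Q X Q`. -/
def sandwich {n : ℕ} (Q : Mn n) : Module.End ℂ (Mn n) :=
  (LinearMap.mulLeft ℂ Q).comp (LinearMap.mulRight ℂ Q)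

/-- The sum of the two components of a pair. -/
def sumPair (n : ℕ) : (Mn n × Mn n) →ₗ[ℂ] Mn n :=
  LinearMap.fst ℂ (Mn n) (Mn n) + LinearMap.snd ℂ (Mn n) (Mn n)

/-- The QMC `Λ_{T,V}` induced by the channel `T` and the subspace `V` (with orthogonal
projection `P` onto `V` and `Q = I − P`):
`Λ(X₁,X₂) = ((I−ℚ)(T(X₁+X₂)), ℚ(T(X₁+X₂)))` where `ℚ(Y) = QYQ`. -/
def Lam {n : ℕ} (T : Module.End ℂ (Mn n)) (Q : Mn n) : Module.End ℂ (Mn n × Mn n) :=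
  LinearMap.prod
    (((1 : Module.End ℂ (Mn n)) - sandwich Q) ∘ₗ (T ∘ₗ sumPair n))
    ((sandwich Q) ∘ₗ (T ∘ₗ sumPair n))

/-- `ℙ₁(X₁,X₂) = (X₁,0)`. -/
def proj1 (n : ℕ) : Module.End ℂ (Mn n × Mn n) :=
  (LinearMap.inl ℂ (Mn n) (Mn n)).comp (LinearMap.fst ℂ (Mn n) (Mn n))

/-- `ℙ₂(X₁,X₂) = (0,X₂)`. -/
def proj2 (n : ℕ) : Module.End ℂ (Mn n × Mn n) :=
  (LinearMap.inr ℂ (Mn n) (Mn n)).comp (LinearMap.snd ℂ (Mn n) (Mn n))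

/-- The block-diagonal part `S_d = diag(S₁₁,S₂₂)` of a map on `M_n ⊕ M_n`. -/
def diagPart {n : ℕ} (S : Module.End ℂ (Mn n × Mn n)) : Module.End ℂ (Mn n × Mn n) :=
  proj1 n * S * proj1 n + proj2 n * S * proj2 n

/-- The map `E(X₁,X₂) = (X₁+X₂, X₁+X₂)`. -/
def Emap (n : ℕ) : Module.End ℂ (Mn n × Mn n) :=
  LinearMap.prod (sumPair n) (sumPair n)

/-- The map `Θ_W(X₁,X₂) = Tr(X₁+X₂)·W`. -/
def Theta {n : ℕ} (W : Mn n × Mn n) : Module.End ℂ (Mn n × Mn n) :=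
  ((Matrix.traceLinearMap (Fin n) ℂ ℂ) ∘ₗ sumPair n).smulRight W

/-- The mean hitting time `τ(ρ → V) = Σ_{r ≥ 1} r·Tr(ℙT(ℚT)^{r−1} ρ)`. -/
def tau {n : ℕ} (T : Module.End ℂ (Mn n)) (P Q : Mn n) (ρ : Mn n) : ℂ :=
  ∑' r : ℕ, ((r : ℂ) + 1) * ((sandwich P * T * (sandwich Q * T) ^ r) ρ).trace

/-- The pure state `ρ_φ = |φ⟩⟨φ|`. -/
def rhoOf {n : ℕ} (φ : Fin n → ℂ) : Mn n := Matrix.vecMulVec φ (star φ)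

/-- A positive map on `M_n`. -/
def IsPosMap {n : ℕ} (T : Module.End ℂ (Mn n)) : Prop :=
  ∀ X : Mn n, X.PosSemidef → (T X).PosSemidef

/-- A trace-preserving map on `M_n`. -/
def IsTracePreserving {n : ℕ} (T : Module.End ℂ (Mn n)) : Prop :=
  ∀ X : Mn n, (T X).trace = X.trace

/-- A quantum channel: a completely positive trace-preserving map, given by a Kraus
decomposition `T(X) = Σᵢ Vᵢ X Vᵢ*` with `Σᵢ Vᵢ* Vᵢ = I`. -/
def IsChannel {n : ℕ} (T : Module.End ℂ (Mn n)) : Prop :=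
  ∃ (k : ℕ) (V : Fin k → Mn n),
    (∀ X : Mn n, T X = ∑ i, V i * X * (V i)ᴴ) ∧ (∑ i, (V i)ᴴ * V i = 1)

/-- Irreducibility of a positive map on `M_n`: the only orthogonal projections `P` with
`T(P M_n P) ⊆ P M_n P` are `P = 0` and `P = I`. -/
def IsIrreducibleMap {n : ℕ} (T : Module.End ℂ (Mn n)) : Prop :=
  ∀ P : Mn n, P.IsHermitian → P * P = P →
    (∀ X : Mn n, ∃ Y : Mn n, T (P * X * P) = P * Y * P) → P = 0 ∨ P = 1


open Filter Topology
open scoped ComplexStarModule MatrixOrder Matrix.Norms.L2Operator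

/-!
Write `S = ℚ ∘ T`. Since `T` is trace preserving, `Tr(ℙ T Y) = Tr Y - Tr (S Y)`, so the hitting
probabilities telescope: the partial sums are `1 - Tr (S^N ρ_φ)`, and it suffices to show that the
nonincreasing sequence `Tr (S^N ρ_φ)` tends to `0`. If its limit `L` were positive, a cluster point
of the Cesàro means of `S^N ρ_φ` would be a positive fixed point `X` of `S` of trace `L`. Then
`Tr (ℙ T X) = 0`, hence `T X = X` and `P X = 0`. The support projection `R` of `X` satisfies
`R ≤ c X`, so positivity of `T` keeps every positive element of `R M_n R` inside `R M_n R`; these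
span `R M_n R`, so irreducibility forces `R = I`, which contradicts `P R = 0` and `P ≠ 0`.
-/

section CStarAlgebra

variable {A : Type*} [CStarAlgebra A]

/-- Since `0⁻¹ = 0`, `x * x⁻¹` is the indicator function of `x ≠ 0`. -/
def supportProj (a : A) : A := cfc (fun x : ℝ => x * x⁻¹) a

lemma isStarProjection_supportProj {a : A} (hfin : (spectrum ℝ a).Finite) :
    IsStarProjection (supportProj a) where
  isIdempotentElem := by
    rw [IsIdempotentElem, supportProj, ← cfc_mul _ _ a (hfin.continuousOn _) (hfin.continuousOn _)]
    congr! 2 with x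
    rcases eq_or_ne x 0 with rfl | hx <;> simp [*]
  isSelfAdjoint := cfc_predicate _ a

lemma supportProj_mul_self {a : A} (hfin : (spectrum ℝ a).Finite) (ha : IsSelfAdjoint a) :
    supportProj a * a = a := by
  calc supportProj a * a = cfc (fun x : ℝ => x * x⁻¹) a * cfc (fun x : ℝ => x) a := by
        rw [supportProj, cfc_id' ℝ a]
    _ = cfc (fun x : ℝ => x) a := by
        rw [← cfc_mul _ _ a (hfin.continuousOn _) (hfin.continuousOn _)]
        congr! 2 with x
        rcases eq_or_ne x 0 with rfl | hx <;> simp [*]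
    _ = a := cfc_id' ℝ a

lemma mul_supportProj_eq_zero {a : A} (hfin : (spectrum ℝ a).Finite) (ha : IsSelfAdjoint a)
    {b : A} (h : b * a = 0) :
    b * supportProj a = 0 := by
  have : supportProj a = a * cfc (·⁻¹ : ℝ → ℝ) a := by
    rw [supportProj, cfc_mul (fun x : ℝ => x) _ a (hfin.continuousOn _) (hfin.continuousOn _),
      cfc_id' ℝ a]
  rw [this, ← mul_assoc, h, zero_mul]

lemma supportProj_le_smul [PartialOrder A] [StarOrderedRing A] {a : A}
    (hfin : (spectrum ℝ a).Finite) (ha : 0 ≤ a) :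
    ∃ c : ℝ, supportProj a ≤ c • a := by
  obtain ⟨c, hc⟩ := (hfin.image (·⁻¹)).bddAbove
  refine ⟨c, ?_⟩
  rw [supportProj, ← cfc_const_mul_id c a]
  refine cfc_mono (fun x hx => ?_) (hfin.continuousOn _) (hfin.continuousOn _)
  rcases eq_or_ne x 0 with rfl | hx0
  · simp
  · have hx0' : 0 < x := (spectrum_nonneg_of_nonneg ha hx).lt_of_ne' hx0
    rw [mul_inv_cancel₀ hx0, ← div_le_iff₀ hx0', one_div]
    exact hc ⟨x, hx, rfl⟩

lemma IsStarProjection.conj_star_of_conj_eq_self {p z : A} (hp : IsStarProjection p)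
    (hz : p * z * p = z) : p * star z * p = star z := by
  conv_rhs => rw [← hz]
  rw [star_mul, star_mul, hp.isSelfAdjoint.star_eq, mul_assoc]

variable [PartialOrder A] [StarOrderedRing A]

lemma mul_eq_zero_of_conj_eq_zero {y e : A} (hy : 0 ≤ y) (he : IsSelfAdjoint e)
    (h : e * y * e = 0) : y * e = 0 := by
  have hsqrt : star (CFC.sqrt y * e) * (CFC.sqrt y * e) = 0 := by
    rw [star_mul, he.star_eq, (CFC.sqrt_nonneg y).star_eq, mul_assoc, ← mul_assoc (CFC.sqrt y),
      CFC.sqrt_mul_sqrt_self y hy, ← mul_assoc, h]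
  rw [← CFC.sqrt_mul_sqrt_self y hy, mul_assoc, (CStarRing.star_mul_self_eq_zero_iff _).mp hsqrt,
    mul_zero]

lemma IsStarProjection.conj_eq_self_of_le_smul {p x w : A} (hp : IsStarProjection p)
    (hpx : p * x = x) (hw : 0 ≤ w) {c : ℝ} (hwx : w ≤ c • x) : p * w * p = w := by
  have hq := hp.one_sub
  have hqx : (1 - p) * x = 0 := by rw [sub_mul, one_mul, hpx, sub_self]
  have hqwq : (1 - p) * w * (1 - p) = 0 := by
    refine le_antisymm ?_ (hq.isSelfAdjoint.conjugate_nonneg hw)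
    calc (1 - p) * w * (1 - p) ≤ (1 - p) * (c • x) * (1 - p) :=
          hq.isSelfAdjoint.conjugate_le_conjugate hwx
      _ = 0 := by rw [mul_smul_comm, hqx, smul_zero, zero_mul]
  have hwq : w * (1 - p) = 0 := mul_eq_zero_of_conj_eq_zero hw hq.isSelfAdjoint hqwq
  have hqw : (1 - p) * w = 0 := by
    simpa [star_mul, hq.isSelfAdjoint.star_eq, hw.isSelfAdjoint.star_eq] using congrArg star hwq
  rw [sub_mul, one_mul, sub_eq_zero] at hqw
  rw [mul_sub, mul_one, sub_eq_zero] at hwq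
  rw [← hqw, ← hwq]

section PositiveMap

variable {T : A →ₗ[ℂ] A} (hT : ∀ y, 0 ≤ y → 0 ≤ T y) {p x : A} (hp : IsStarProjection p)
  (hTx : T x = x) (hpx : p * x = x)
include hT hp hTx hpx

lemma IsStarProjection.conj_map_eq_self_of_le_smul {w : A} (hw : 0 ≤ w) {d : ℝ}
    (hwx : w ≤ d • x) : p * T w * p = T w := by
  refine hp.conj_eq_self_of_le_smul hpx (hT w hw) (c := d) ?_
  have := hT _ (sub_nonneg.mpr hwx)
  rwa [map_sub, LinearMap.map_smul_of_tower, hTx, sub_nonneg] at this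

lemma IsStarProjection.conj_map_eq_self_of_isSelfAdjoint {c : ℝ} (hpc : p ≤ c • x) {h : A}
    (hh : IsSelfAdjoint h) (hph : p * h * p = h) : p * T h * p = T h := by
  have hle : h ≤ ‖h‖ • p := by
    simpa [hph, hp.isSelfAdjoint.star_eq, hp.isIdempotentElem.eq] using
      CStarAlgebra.star_left_conjugate_le_norm_smul (a := p) hh
  have hge : -h ≤ ‖h‖ • p := by
    simpa [hph, hp.isSelfAdjoint.star_eq, hp.isIdempotentElem.eq] using
      CStarAlgebra.star_left_conjugate_le_norm_smul (a := p) hh.neg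
  have hdom (r : ℝ) (hr : 0 ≤ r) : r • p ≤ (r * c) • x := by
    rw [mul_smul]
    exact smul_le_smul_of_nonneg_left hpc hr
  -- `h = (h + ‖h‖ • p) - ‖h‖ • p` is a difference of positive elements dominated by `x`.
  have h1 := hp.conj_map_eq_self_of_le_smul hT hTx hpx (neg_le_iff_add_nonneg'.mp hge)
    (calc h + ‖h‖ • p ≤ (2 * ‖h‖) • p := by rw [two_mul, add_smul]; gcongr
      _ ≤ (2 * ‖h‖ * c) • x := hdom _ (by positivity))
  have h2 := hp.conj_map_eq_self_of_le_smul hT hTx hpx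
    (smul_nonneg (norm_nonneg h) hp.nonneg) (hdom _ (norm_nonneg h))
  rw [← add_sub_cancel_right h (‖h‖ • p), map_sub, mul_sub, sub_mul, h1, h2]

lemma IsStarProjection.conj_map_conj_eq_self {c : ℝ} (hpc : p ≤ c • x) (y : A) :
    p * T (p * y * p) * p = T (p * y * p) := by
  set z := p * y * p
  have hz : p * z * p = z := by
    simp only [z, ← mul_assoc, hp.isIdempotentElem.eq]
    simp only [mul_assoc, hp.isIdempotentElem.eq]
  have hz' := hp.conj_star_of_conj_eq_self hz
  have hre : p * (ℜ z : A) * p = ℜ z := by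
    simp only [realPart_apply_coe, mul_smul_comm, smul_mul_assoc, mul_add, add_mul, hz, hz']
  have him : p * (ℑ z : A) * p = ℑ z := by
    simp only [imaginaryPart_apply_coe, mul_smul_comm, smul_mul_assoc, mul_sub, sub_mul, hz, hz']
  rw [← realPart_add_I_smul_imaginaryPart z, map_add, map_smul, mul_add, add_mul, mul_smul_comm,
    smul_mul_assoc, hp.conj_map_eq_self_of_isSelfAdjoint hT hTx hpx hpc (ℜ z).2 hre,
    hp.conj_map_eq_self_of_isSelfAdjoint hT hTx hpx hpc (ℑ z).2 him]

end PositiveMap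

end CStarAlgebra

section Cesaro

variable {𝕜 E : Type*} [RCLike 𝕜] [NormedAddCommGroup E] [NormedSpace 𝕜 E]

def cesaroMean (S : E →ₗ[𝕜] E) (x : E) (M : ℕ) : E :=
  (M : 𝕜)⁻¹ • ∑ N ∈ Finset.range M, (S ^ N) x

variable (S : E →ₗ[𝕜] E) (x : E)

lemma map_cesaroMean_sub (M : ℕ) :
    S (cesaroMean S x M) - cesaroMean S x M = (M : 𝕜)⁻¹ • ((S ^ M) x - x) := by
  rw [cesaroMean, map_smul, map_sum, ← smul_sub, ← Finset.sum_sub_distrib]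
  simp_rw [← Module.End.mul_apply, ← pow_succ']
  rw [Finset.sum_range_sub (fun N => (S ^ N) x), pow_zero, Module.End.one_apply]

lemma norm_cesaroMean_le {C : ℝ} (hC : ∀ N, ‖(S ^ N) x‖ ≤ C) (M : ℕ) :
    ‖cesaroMean S x M‖ ≤ C := by
  rcases Nat.eq_zero_or_pos M with rfl | hM
  · simpa [cesaroMean] using (norm_nonneg x).trans (by simpa using hC 0)
  rw [cesaroMean, norm_smul, norm_inv, RCLike.norm_natCast, inv_mul_le_iff₀ (by positivity)]
  simpa using norm_sum_le_of_le (Finset.range M) (fun N _ => hC N)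

variable [FiniteDimensional 𝕜 E]

lemma exists_tendsto_cesaroMean_fixedPoint {C : ℝ} (hC : ∀ N, ‖(S ^ N) x‖ ≤ C) :
    ∃ y, ∃ φ : ℕ → ℕ, StrictMono φ ∧ Tendsto (cesaroMean S x ∘ φ) atTop (𝓝 y) ∧ S y = y := by
  have : ProperSpace E := FiniteDimensional.proper 𝕜 E
  obtain ⟨y, -, φ, hφ, hy⟩ := tendsto_subseq_of_bounded (Metric.isBounded_closedBall (x := 0))
    fun M => mem_closedBall_zero_iff.mpr (norm_cesaroMean_le S x hC M)
  refine ⟨y, φ, hφ, hy, ?_⟩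
  have hlim : Tendsto (fun k => S (cesaroMean S x (φ k)) - cesaroMean S x (φ k)) atTop
      (𝓝 (S y - y)) :=
    ((S.continuous_of_finiteDimensional.tendsto y).comp hy).sub hy
  have hzero : Tendsto (fun M => S (cesaroMean S x M) - cesaroMean S x M) atTop (𝓝 0) := by
    simp_rw [map_cesaroMean_sub]
    refine tendsto_inv_atTop_nhds_zero_nat.zero_smul_isBoundedUnder_le
      (isBoundedUnder_of ⟨C + C, fun M => ?_⟩)
    exact (norm_sub_le _ _).trans (add_le_add (hC M) (by simpa using hC 0))
  exact sub_eq_zero.mp (tendsto_nhds_unique hlim (hzero.comp hφ.tendsto_atTop))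

end Cesaro

section Matrix

variable {ι : Type*} [Fintype ι]

lemma Matrix.norm_le_re_trace_of_nonneg [DecidableEq ι] {X : Matrix ι ι ℂ} (hX : 0 ≤ X) :
    ‖X‖ ≤ X.trace.re := by
  cases isEmpty_or_nonempty ι
  · simp [Subsingleton.elim X 0]
  have hX' := nonneg_iff_posSemidef.mp hX
  obtain ⟨i, hi⟩ := (hX'.isHermitian.spectrum_real_eq_range_eigenvalues ▸
    CStarAlgebra.norm_mem_spectrum_of_nonneg hX : ‖X‖ ∈ Set.range _)
  rw [hX'.isHermitian.trace_eq_sum_eigenvalues, ← hi, Complex.re_sum]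
  exact Finset.single_le_sum (fun j _ => hX'.eigenvalues_nonneg j) (Finset.mem_univ i)

lemma Matrix.re_trace_nonneg_of_nonneg {X : Matrix ι ι ℂ} (hX : 0 ≤ X) : 0 ≤ X.trace.re :=
  (Complex.le_def.mp (nonneg_iff_posSemidef.mp hX).trace_nonneg).1

lemma Matrix.ofReal_re_trace_of_nonneg {X : Matrix ι ι ℂ} (hX : 0 ≤ X) :
    (X.trace.re : ℂ) = X.trace :=
  (Complex.eq_re_of_ofReal_le (r := 0) (by
    rw [Complex.ofReal_zero]; exact (nonneg_iff_posSemidef.mp hX).trace_nonneg)).symm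

end Matrix

section PositiveMaps

variable {n : ℕ}

@[simp]
lemma sandwich_apply (Q X : Mn n) : sandwich Q X = Q * X * Q := by
  simp [sandwich, mul_assoc]

lemma trace_sandwich_add_trace_sandwich_one_sub {P : Mn n} (hP : P * P = P) (X : Mn n) :
    (sandwich P X).trace + (sandwich (1 - P) X).trace = X.trace := by
  have hQ : (1 - P) * (1 - P) = 1 - P := by noncomm_ring; rw [hP]; abel
  simp only [sandwich_apply]
  rw [trace_mul_cycle, hP, trace_mul_cycle, hQ, ← trace_add, ← add_mul, add_sub_cancel, one_mul]

lemma IsPosMap.nonneg {T : Module.End ℂ (Mn n)} (hT : IsPosMap T) {X : Mn n} (hX : 0 ≤ X) :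
    0 ≤ T X :=
  nonneg_iff_posSemidef.mpr (hT X (nonneg_iff_posSemidef.mp hX))

lemma IsPosMap.mul {S T : Module.End ℂ (Mn n)} (hS : IsPosMap S) (hT : IsPosMap T) :
    IsPosMap (S * T) :=
  fun X hX => hS _ (hT X hX)

lemma IsPosMap.pow_apply_nonneg {S : Module.End ℂ (Mn n)} (hS : IsPosMap S) {ρ : Mn n}
    (hρ : 0 ≤ ρ) (N : ℕ) : 0 ≤ (S ^ N) ρ := by
  induction N with
  | zero => simpa using hρ
  | succ N ih => rw [pow_succ', Module.End.mul_apply]; exact hS.nonneg ih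

lemma isPosMap_sandwich {Q : Mn n} (hQ : Q.IsHermitian) : IsPosMap (sandwich Q) := by
  intro X hX
  simpa [hQ.eq] using hX.mul_mul_conjTranspose_same Q

lemma IsPosMap.exists_fixedPoint_of_tendsto_trace {S : Module.End ℂ (Mn n)} (hS : IsPosMap S)
    {ρ : Mn n} (hρ : 0 ≤ ρ) {L : ℝ}
    (hL : Tendsto (fun N => ((S ^ N) ρ).trace.re) atTop (𝓝 L)) :
    ∃ X, 0 ≤ X ∧ S X = X ∧ X.trace = L := by
  have horbit := hS.pow_apply_nonneg hρ
  obtain ⟨C, hC⟩ := hL.bddAbove_range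
  obtain ⟨X, φ, hφ, hX, hSX⟩ := exists_tendsto_cesaroMean_fixedPoint S ρ (C := C)
    fun N => (norm_le_re_trace_of_nonneg (horbit N)).trans (hC ⟨N, rfl⟩)
  have hmean (M : ℕ) : 0 ≤ cesaroMean S ρ M :=
    smul_nonneg (by simp) (Finset.sum_nonneg fun N _ => horbit N)
  have htrace (M : ℕ) : (cesaroMean S ρ M).trace =
      (((M : ℝ)⁻¹ * ∑ N ∈ Finset.range M, ((S ^ N) ρ).trace.re : ℝ) : ℂ) := by
    simp [cesaroMean, trace_sum, ofReal_re_trace_of_nonneg (horbit _)]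
  refine ⟨X, CStarAlgebra.isClosed_nonneg.mem_of_tendsto hX (.of_forall fun M => hmean (φ M)),
    hSX, tendsto_nhds_unique ((continuous_id.matrix_trace.tendsto X).comp hX) ?_⟩
  convert (Complex.continuous_ofReal.tendsto L).comp (hL.cesaro.comp hφ.tendsto_atTop) using 1
  ext k
  exact htrace (φ k)

variable {T : Module.End ℂ (Mn n)} {P : Mn n}

lemma IsIrreducibleMap.eq_zero_of_mul_eq_zero (hirr : IsIrreducibleMap T) (hT : IsPosMap T)
    {X : Mn n} (hX : 0 ≤ X) (hTX : T X = X) (hX0 : X ≠ 0) {B : Mn n} (hB : B * X = 0) :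
    B = 0 := by
  have hfin : (spectrum ℝ X).Finite := finite_real_spectrum
  have hR := isStarProjection_supportProj hfin
  have hRX := supportProj_mul_self hfin hX.isSelfAdjoint
  obtain ⟨c, hc⟩ := supportProj_le_smul hfin hX
  have hinv (Y : Mn n) : ∃ Z, T (supportProj X * Y * supportProj X) =
      supportProj X * Z * supportProj X :=
    ⟨_, (hR.conj_map_conj_eq_self (fun _ => hT.nonneg) hTX hRX hc Y).symm⟩
  rcases hirr _ hR.isSelfAdjoint hR.isIdempotentElem.eq hinv with h | h
  · exact absurd (by rw [← hRX, h, zero_mul]) hX0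
  · simpa [h] using mul_supportProj_eq_zero hfin hX.isSelfAdjoint hB

lemma isPosMap_sandwich_one_sub_mul (hT : IsPosMap T) (hPH : P.IsHermitian) :
    IsPosMap (sandwich (1 - P : Mn n) * T) :=
  (isPosMap_sandwich (isHermitian_one.sub hPH)).mul hT

lemma trace_sandwich_map_eq_sub (hTtr : IsTracePreserving T) (hP : P * P = P) (Y : Mn n) :
    (sandwich P (T Y)).trace = Y.trace - ((sandwich (1 - P : Mn n) * T) Y).trace := by
  rw [Module.End.mul_apply, ← hTtr Y, ← trace_sandwich_add_trace_sandwich_one_sub hP (T Y)]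
  ring

lemma trace_sandwich_mul_pow_apply (hTtr : IsTracePreserving T) (hP : P * P = P) (ρ : Mn n)
    (r : ℕ) : ((sandwich P * T * (sandwich (1 - P : Mn n) * T) ^ r) ρ).trace =
      (((sandwich (1 - P : Mn n) * T) ^ r) ρ).trace -
        (((sandwich (1 - P : Mn n) * T) ^ (r + 1)) ρ).trace := by
  rw [Module.End.mul_apply, Module.End.mul_apply, trace_sandwich_map_eq_sub hTtr hP, pow_succ']
  rfl

lemma IsPosMap.map_eq_self_of_sandwich_one_sub_mul (hT : IsPosMap T) (hTtr : IsTracePreserving T)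
    (hPH : P.IsHermitian) (hP : P * P = P) {X : Mn n} (hX : 0 ≤ X)
    (hfix : (sandwich (1 - P : Mn n) * T) X = X) : T X = X := by
  have hTX := hT.nonneg hX
  have hzero : P * T X * P = 0 := by
    rw [← sandwich_apply,
      ← (isPosMap_sandwich hPH _ (nonneg_iff_posSemidef.mp hTX)).trace_eq_zero_iff,
      trace_sandwich_map_eq_sub hTtr hP, hfix, sub_self]
  have h1 : T X * P = 0 := mul_eq_zero_of_conj_eq_zero hTX hPH hzero
  have h2 : P * T X = 0 := by
    simpa [IsSelfAdjoint.star_eq hPH, hTX.isSelfAdjoint.star_eq] using congrArg star h1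
  calc T X = (1 - P) * T X * (1 - P) := by simp [sub_mul, mul_sub, h1, h2]
    _ = X := by simpa using hfix

lemma antitone_re_trace_pow_sandwich_one_sub_mul (hT : IsPosMap T) (hTtr : IsTracePreserving T)
    (hPH : P.IsHermitian) (hP : P * P = P) {ρ : Mn n} (hρ : 0 ≤ ρ) :
    Antitone fun N => (((sandwich (1 - P : Mn n) * T) ^ N) ρ).trace.re := by
  refine antitone_nat_of_succ_le fun N => ?_
  have hY := (isPosMap_sandwich_one_sub_mul hT hPH).pow_apply_nonneg hρ N
  have hPY := re_trace_nonneg_of_nonneg ((isPosMap_sandwich hPH).nonneg (hT.nonneg hY))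
  rw [trace_sandwich_map_eq_sub hTtr hP, ← Module.End.mul_apply, ← pow_succ', Complex.sub_re]
    at hPY
  linarith

theorem tendsto_re_trace_pow_sandwich_one_sub_mul (hT : IsPosMap T) (hTtr : IsTracePreserving T)
    (hirr : IsIrreducibleMap T) (hPH : P.IsHermitian) (hP : P * P = P) (hP0 : P ≠ 0)
    {ρ : Mn n} (hρ : 0 ≤ ρ) :
    Tendsto (fun N => (((sandwich (1 - P : Mn n) * T) ^ N) ρ).trace.re) atTop (𝓝 0) := by
  set S := sandwich (1 - P : Mn n) * T
  have hS : IsPosMap S := isPosMap_sandwich_one_sub_mul hT hPH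
  have hL := tendsto_atTop_ciInf (antitone_re_trace_pow_sandwich_one_sub_mul hT hTtr hPH hP hρ)
    ⟨0, by rintro _ ⟨N, rfl⟩; exact re_trace_nonneg_of_nonneg (hS.pow_apply_nonneg hρ N)⟩
  suffices h : ⨅ N, ((S ^ N) ρ).trace.re = 0 by rwa [h] at hL
  by_contra hne
  obtain ⟨X, hX, hSX, htr⟩ := hS.exists_fixedPoint_of_tendsto_trace hρ hL
  have hX0 : X ≠ 0 := by
    rintro rfl
    exact hne (by exact_mod_cast (trace_zero (Fin n) ℂ ▸ htr).symm)
  have hPX : P * X = 0 := by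
    have hPQ : P * (1 - P) = 0 := by rw [mul_sub, mul_one, hP, sub_self]
    rw [← hSX, Module.End.mul_apply, sandwich_apply, ← mul_assoc, ← mul_assoc, hPQ, zero_mul,
      zero_mul]
  exact hP0 <| hirr.eq_zero_of_mul_eq_zero hT hX
    (hT.map_eq_self_of_sandwich_one_sub_mul hTtr hPH hP hX hSX) hX0 hPX

end PositiveMaps

lemma hasSum_sub_succ_of_antitone {a : ℕ → ℝ} (ha : Antitone a) {l : ℝ}
    (hl : Tendsto a atTop (𝓝 l)) : HasSum (fun r => a r - a (r + 1)) (a 0 - l) :=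
  (hasSum_iff_tendsto_nat_of_nonneg (fun r => sub_nonneg.mpr (ha r.le_succ)) _).mpr <| by
    simpa only [Finset.sum_range_sub'] using tendsto_const_nhds.sub hl

/-- For an irreducible positive trace-preserving map `T` on `M_n` and a
nonzero subspace `V` (orthogonal projection `P ≠ 0`, `Q = I − P`), the hitting
probability of `V` from any unit vector `φ` equals 1:
`Σ_{r≥1} Tr(ℙT(ℚT)^{r−1}ρ_φ) = 1`. -/
theorem stmt17 {n : ℕ} (T : Module.End ℂ (Mn n))
    (hTpos : IsPosMap T) (hTtr : IsTracePreserving T) (hirr : IsIrreducibleMap T)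
    (P : Mn n) (hPH : P.IsHermitian) (hPidem : P * P = P) (hP0 : P ≠ 0)
    (Q : Mn n) (hQ : Q = 1 - P) :
    ∀ φ : Fin n → ℂ, star φ ⬝ᵥ φ = 1 →
      (∑' r : ℕ, ((sandwich P * T * (sandwich Q * T) ^ r) (rhoOf φ)).trace) = 1 := by
  intro φ hφ
  subst hQ
  have hρ : 0 ≤ rhoOf φ := nonneg_iff_posSemidef.mpr (posSemidef_vecMulVec_self_star φ)
  set a : ℕ → ℝ := fun N => (((sandwich (1 - P : Mn n) * T) ^ N) (rhoOf φ)).trace.re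
  have hS := isPosMap_sandwich_one_sub_mul hTpos hPH
  have hterm (r : ℕ) : ((sandwich P * T * (sandwich (1 - P : Mn n) * T) ^ r) (rhoOf φ)).trace =
      (a r - a (r + 1) : ℝ) := by
    rw [trace_sandwich_mul_pow_apply hTtr hPidem, Complex.ofReal_sub,
      ofReal_re_trace_of_nonneg (hS.pow_apply_nonneg hρ r),
      ofReal_re_trace_of_nonneg (hS.pow_apply_nonneg hρ (r + 1))]
  have hsum : HasSum (fun r => a r - a (r + 1)) (a 0 - 0) := hasSum_sub_succ_of_antitone
    (antitone_re_trace_pow_sandwich_one_sub_mul hTpos hTtr hPH hPidem hρ)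
    (tendsto_re_trace_pow_sandwich_one_sub_mul hTpos hTtr hirr hPH hPidem hP0 hρ)
  have ha0 : a 0 = 1 := by
    simp only [a, pow_zero, Module.End.one_apply, rhoOf, trace_vecMulVec]
    rw [dotProduct_comm, hφ, Complex.one_re]
  rw [tsum_congr hterm, ← Complex.ofReal_tsum, hsum.tsum_eq, ha0, sub_zero, Complex.ofReal_one]
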